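/- The function A is differentiable with A'(w) = sinh(2J)/(cosh(2J) + cosh(2w)) for every real w; consequently sup_w |A'(w)| = |tanh(J)| = |1−2p|, and A is Lipschitz with constant |1−2p|: |A(u) − A(v)| ≤ |1−2p|·|u − v| for all real u, v. -/

import Mathlib

/-!
Since `(log ∘ cosh)' = tanh`, the derivative of `A` is `(tanh (w + J) - tanh (w - J)) / 2`, which the
addition formulas turn into `sinh (2J) / (cosh (2J) + cosh (2w))`. As `cosh (2w) ≥ 1 = cosh 0`, its
absolute value is largest at `w = 0`, where it equals `tanh J`; and `e^{2J} = (1 - p) / p` gives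
`tanh J = 1 - 2p`. The Lipschitz bound is then the mean value inequality.
-/

namespace Real

lemma cosh_add_add_cosh_sub (a b : ℝ) : cosh (a + b) + cosh (a - b) = 2 * (cosh a * cosh b) := by
  rw [cosh_add, cosh_sub]
  ring

lemma tanh_sub_tanh (a b : ℝ) : tanh a - tanh b = sinh (a - b) / (cosh a * cosh b) := by
  have ha := (cosh_pos a).ne'
  have hb := (cosh_pos b).ne'
  rw [tanh_eq_sinh_div_cosh, tanh_eq_sinh_div_cosh, sinh_sub]
  field_simp

lemma tanh_add_sub_tanh_sub_div_two (a w : ℝ) :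
    (tanh (w + a) - tanh (w - a)) / 2 = sinh (2 * a) / (cosh (2 * a) + cosh (2 * w)) := by
  have hsum : cosh (2 * a) + cosh (2 * w) = 2 * (cosh (w + a) * cosh (w - a)) := by
    rw [← cosh_add_add_cosh_sub]
    ring_nf
  rw [tanh_sub_tanh, hsum, div_div, mul_comm 2]
  ring_nf

lemma tanh_eq_sinh_two_mul_div (a : ℝ) : tanh a = sinh (2 * a) / (cosh (2 * a) + 1) := by
  simpa [tanh_neg, ← two_mul, mul_div_cancel_left₀] using tanh_add_sub_tanh_sub_div_two a 0

lemma abs_sinh_two_mul_div_le_abs_tanh (a w : ℝ) :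
    |sinh (2 * a) / (cosh (2 * a) + cosh (2 * w))| ≤ |tanh a| := by
  have hpos : 0 < cosh (2 * a) + 1 := by linarith [cosh_pos (2 * a)]
  have hle : cosh (2 * a) + 1 ≤ cosh (2 * a) + cosh (2 * w) := by linarith [one_le_cosh (2 * w)]
  rw [tanh_eq_sinh_two_mul_div, abs_div, abs_div, abs_of_pos (hpos.trans_le hle), abs_of_pos hpos]
  exact div_le_div_of_nonneg_left (abs_nonneg _) hpos hle

lemma tanh_half_mul_log {x : ℝ} (hx : 0 < x) : tanh (1 / 2 * log x) = (x - 1) / (x + 1) := by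
  have hsq : exp (1 / 2 * log x) ^ 2 = x := by
    rw [← exp_nat_mul, Nat.cast_ofNat, ← mul_assoc, mul_one_div_cancel two_ne_zero, one_mul,
      exp_log hx]
  have he := exp_pos (1 / 2 * log x)
  rw [tanh_eq, exp_neg, div_eq_div_iff (by positivity) (by linarith)]
  generalize exp (1 / 2 * log x) = e at hsq he ⊢
  field_simp
  linear_combination (2 : ℝ) * hsq

lemma tanh_half_mul_log_odds {p : ℝ} (hp0 : 0 < p) (hp1 : p < 1) :
    tanh (1 / 2 * log ((1 - p) / p)) = 1 - 2 * p := by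
  rw [tanh_half_mul_log (div_pos (sub_pos.2 hp1) hp0)]
  field_simp
  ring

lemma hasDerivAt_log_cosh (x : ℝ) : HasDerivAt (fun u => log (cosh u)) (tanh x) x := by
  simpa [tanh_eq_sinh_div_cosh] using (hasDerivAt_cosh x).log (cosh_pos x).ne'

lemma hasDerivAt_half_log_cosh_add_div_cosh_sub (a w : ℝ) :
    HasDerivAt (fun u => 1 / 2 * log (cosh (u + a) / cosh (u - a)))
      (sinh (2 * a) / (cosh (2 * a) + cosh (2 * w))) w := by
  have hsplit : (fun u => 1 / 2 * log (cosh (u + a) / cosh (u - a)))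
      = fun u => (log (cosh (u + a)) - log (cosh (u - a))) / 2 := by
    funext u
    rw [log_div (cosh_pos _).ne' (cosh_pos _).ne']
    ring
  rw [hsplit, ← tanh_add_sub_tanh_sub_div_two]
  exact (((hasDerivAt_log_cosh _).comp_add_const w a).sub
    ((hasDerivAt_log_cosh _).comp_sub_const w a)).div_const 2

end Real

open Real in
theorem stmt_3 (p : ℝ) (hp0 : 0 < p) (hp1 : p < 1)
    (J : ℝ) (hJ : J = (1 / 2) * Real.log ((1 - p) / p))
    (A : ℝ → ℝ)
    (hA : ∀ u, A u = (1 / 2) * Real.log (Real.cosh (u + J) / Real.cosh (u - J))) :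
    (∀ w : ℝ,
      HasDerivAt A (Real.sinh (2 * J) / (Real.cosh (2 * J) + Real.cosh (2 * w))) w)
    ∧ (⨆ w : ℝ, |deriv A w|) = |Real.tanh J|
    ∧ |Real.tanh J| = |1 - 2 * p|
    ∧ ∀ u v : ℝ, |A u - A v| ≤ |1 - 2 * p| * |u - v| := by
  have hderiv (w : ℝ) : HasDerivAt A (sinh (2 * J) / (cosh (2 * J) + cosh (2 * w))) w := by
    rw [show A = _ from funext hA]
    exact hasDerivAt_half_log_cosh_add_div_cosh_sub J w
  have hbound (w : ℝ) : |deriv A w| ≤ |tanh J| := by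
    rw [(hderiv w).deriv]
    exact abs_sinh_two_mul_div_le_abs_tanh J w
  have hmax : |deriv A 0| = |tanh J| := by
    rw [(hderiv 0).deriv, mul_zero, cosh_zero, ← tanh_eq_sinh_two_mul_div]
  have htanh : tanh J = 1 - 2 * p := hJ ▸ tanh_half_mul_log_odds hp0 hp1
  refine ⟨hderiv, ciSup_eq_of_forall_le_of_forall_lt_exists_gt hbound
    fun _ hlt => ⟨0, hlt.trans_eq hmax.symm⟩, by rw [htanh], fun u v => ?_⟩
  rw [← htanh]
  simpa only [norm_eq_abs] using convex_univ.norm_image_sub_le_of_norm_deriv_le (fun x _ => (hderiv x).differentiableAt)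
    (fun x _ => hbound x) (Set.mem_univ v) (Set.mem_univ u)
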